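/- arXiv:1206.5373 — 2 statements merged into one kernel-verified Lean document; each statement's English description precedes it below -/
import Mathlib

section
/- With respect to the topology induced by the metric d(f,g) = ‖supp(f⁻¹∘g)‖, the group G = {g ∈ Sym(ℕ×ℕ) : ‖supp(g)‖ < ∞} is a topological group: composition G×G → G and inversion G → G are continuous. In particular, for every f ∈ G the conjugation map h ↦ f∘h∘f⁻¹ is continuous at the identity. -/
open scoped ENNReal

/-- The weight of a point `(i,j) ∈ ℕ × ℕ`: `2 · 3^{-(i+1)}`. -/
noncomputable def wt (p : ℕ × ℕ) : ℝ≥0∞ := 2 * ((3 : ℝ≥0∞) ^ (p.1 + 1))⁻¹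

/-- `‖S‖ = Σ_{(i,j) ∈ S} 2 · 3^{-(i+1)} ∈ [0,∞]` for `S ⊆ ℕ × ℕ`. -/
noncomputable def nrmS (S : Set (ℕ × ℕ)) : ℝ≥0∞ := ∑' p, S.indicator wt p

lemma nrmS_mono {S T : Set (ℕ × ℕ)} (h : S ⊆ T) : nrmS S ≤ nrmS T :=
  ENNReal.tsum_le_tsum fun p =>
    Set.indicator_le_indicator_of_subset h (fun _ => zero_le) p

lemma nrmS_union_le (S T : Set (ℕ × ℕ)) : nrmS (S ∪ T) ≤ nrmS S + nrmS T := by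
  rw [nrmS, nrmS, nrmS, ← ENNReal.tsum_add]
  refine ENNReal.tsum_le_tsum fun p => ?_
  by_cases hS : p ∈ S
  · refine le_trans ?_ (le_add_right le_rfl)
    rw [Set.indicator_of_mem (Set.mem_union_left _ hS), Set.indicator_of_mem hS]
  · by_cases hT : p ∈ T
    · refine le_trans ?_ (le_add_left le_rfl)
      rw [Set.indicator_of_mem (Set.mem_union_right _ hT), Set.indicator_of_mem hT]
    · rw [Set.indicator_of_notMem (fun hc => hc.elim hS hT)]
      exact zero_le

lemma nrmS_empty : nrmS ∅ = 0 := by simp [nrmS]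

/-- The support of `z : ℕ × ℕ → ZMod 2`. -/
def suppZ (z : ℕ × ℕ → ZMod 2) : Set (ℕ × ℕ) := {p | z p = 1}

/-- `‖z‖` for `z : ℕ × ℕ → ZMod 2`. -/
noncomputable def nrmZ (z : ℕ × ℕ → ZMod 2) : ℝ≥0∞ := nrmS (suppZ z)

/-- `H = {z : ℕ × ℕ → ZMod 2 | ‖z‖ < ∞}`, as an (additive) subgroup of the product group
`ℕ × ℕ → ZMod 2` with pointwise addition mod 2. -/
noncomputable def Hgrp : AddSubgroup ((ℕ × ℕ) → ZMod 2) where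
  carrier := {z | nrmZ z < ⊤}
  zero_mem' := by
    have h : suppZ 0 = ∅ := by ext p; simp [suppZ]
    simp [nrmZ, h, nrmS_empty]
  add_mem' {z w} hz hw := by
    have hsub : suppZ (z + w) ⊆ suppZ z ∪ suppZ w := by
      intro p hp
      by_contra hc
      simp only [Set.mem_union, suppZ, Set.mem_setOf_eq, not_or] at hc
      have hdi : ∀ x : ZMod 2, x = 0 ∨ x = 1 := by decide
      have hz0 : z p = 0 := (hdi (z p)).resolve_right hc.1
      have hw0 : w p = 0 := (hdi (w p)).resolve_right hc.2
      have hp' : (z + w) p = 1 := hp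
      rw [Pi.add_apply, hz0, hw0] at hp'
      exact absurd hp' (by decide)
    calc nrmZ (z + w) ≤ nrmS (suppZ z ∪ suppZ w) := nrmS_mono hsub
      _ ≤ nrmZ z + nrmZ w := nrmS_union_le _ _
      _ < ⊤ := ENNReal.add_lt_top.2 ⟨hz, hw⟩
  neg_mem' {z} hz := by
    have h : suppZ (-z) = suppZ z := by
      ext p; simp [suppZ, CharTwo.neg_eq]
    simpa [nrmZ, h] using hz
/-- `φ(x) = Σ_i 2 · x i · 3^{-(i+1)}`, the standard map from `2^ℕ` onto the ternary Cantor
set (values of `x` read as `0, 1` in `ℝ`). -/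
noncomputable def phiC (x : ℕ → ZMod 2) : ℝ :=
  ∑' i, 2 * ((x i).val : ℝ) * ((3 : ℝ) ^ (i + 1))⁻¹

/-- The metric on `H`: `d_H(z,w) = Σ_j |φ(z(·,j)) − φ(w(·,j))|`, the `ℓ¹`-distance between
the corresponding points of `C^ℕ ∩ ℓ¹`. -/
noncomputable def dH (z w : ↥Hgrp) : ℝ :=
  ∑' j, |phiC (fun i => (z : (ℕ × ℕ) → ZMod 2) (i, j)) -
          phiC (fun i => (w : (ℕ × ℕ) → ZMod 2) (i, j))|

/-- The support of a permutation `g` of `ℕ × ℕ`. -/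
def suppP (g : Equiv.Perm (ℕ × ℕ)) : Set (ℕ × ℕ) := {p | g p ≠ p}

lemma suppP_inv (g : Equiv.Perm (ℕ × ℕ)) : suppP g⁻¹ = suppP g := by
  ext p
  simp only [suppP, Set.mem_setOf_eq, ne_eq]
  constructor
  · intro h hc
    exact h (by conv_lhs => rw [← hc]; rw [Equiv.Perm.inv_def, Equiv.symm_apply_apply] ; )
  · intro h hc
    exact h (by conv_lhs => rw [← hc]; rw [Equiv.Perm.inv_def, Equiv.apply_symm_apply])

/-- `G = {g ∈ Sym(ℕ × ℕ) | ‖supp g‖ < ∞}`, as a subgroup of the symmetric group of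
`ℕ × ℕ`. -/
noncomputable def Ggrp : Subgroup (Equiv.Perm (ℕ × ℕ)) where
  carrier := {g | nrmS (suppP g) < ⊤}
  one_mem' := by
    have h : suppP 1 = ∅ := by ext p; simp [suppP]
    simp [h, nrmS_empty]
  mul_mem' {f g} hf hg := by
    have hsub : suppP (f * g) ⊆ suppP f ∪ suppP g := by
      intro p hp
      by_contra hc
      simp only [Set.mem_union, suppP, Set.mem_setOf_eq, ne_eq, not_or, not_not] at hc
      exact hp (by simp only [suppP, Set.mem_setOf_eq, Equiv.Perm.mul_apply, hc.2, hc.1] at *)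
    calc nrmS (suppP (f * g)) ≤ nrmS (suppP f ∪ suppP g) := nrmS_mono hsub
      _ ≤ nrmS (suppP f) + nrmS (suppP g) := nrmS_union_le _ _
      _ < ⊤ := ENNReal.add_lt_top.2 ⟨hf, hg⟩
  inv_mem' {g} hg := by simpa [suppP_inv] using hg

/-- The metric on `G`: `d(f,g) = ‖supp (f⁻¹ ∘ g)‖`. -/
noncomputable def dG (f g : ↥Ggrp) : ℝ :=
  (nrmS (suppP ((f : Equiv.Perm (ℕ × ℕ))⁻¹ * (g : Equiv.Perm (ℕ × ℕ))))).toReal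

/-- The action of `G` on `H`: `g • h = h ∘ g⁻¹`. -/
noncomputable def actGH (g : ↥Ggrp) (h : ↥Hgrp) : ↥Hgrp :=
  ⟨fun p => (h : (ℕ × ℕ) → ZMod 2) (((g : Equiv.Perm (ℕ × ℕ)))⁻¹ p), by
    have hsub : suppZ (fun p => (h : (ℕ × ℕ) → ZMod 2) (((g : Equiv.Perm (ℕ × ℕ)))⁻¹ p)) ⊆
        suppZ (h : (ℕ × ℕ) → ZMod 2) ∪ suppP (g : Equiv.Perm (ℕ × ℕ)) := by
      intro p hp
      by_cases hgp : ((g : Equiv.Perm (ℕ × ℕ)))⁻¹ p = p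
      · left
        have : (h : (ℕ × ℕ) → ZMod 2) (((g : Equiv.Perm (ℕ × ℕ)))⁻¹ p) = 1 := hp
        rwa [hgp] at this
      · right
        have : p ∈ suppP ((g : Equiv.Perm (ℕ × ℕ)))⁻¹ := hgp
        rwa [suppP_inv] at this
    show nrmZ _ < ⊤
    calc nrmZ _ ≤ nrmS (suppZ (h : (ℕ × ℕ) → ZMod 2) ∪ suppP (g : Equiv.Perm (ℕ × ℕ))) :=
          nrmS_mono hsub
      _ ≤ nrmZ (h : (ℕ × ℕ) → ZMod 2) + nrmS (suppP (g : Equiv.Perm (ℕ × ℕ))) :=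
          nrmS_union_le _ _
      _ < ⊤ := ENNReal.add_lt_top.2 ⟨h.2, g.2⟩⟩

/-- The topology on `G` induced by the metric `d`: the topology generated by the open balls
of `d`. -/
noncomputable def tG : TopologicalSpace ↥Ggrp :=
  TopologicalSpace.generateFrom
    {s | ∃ (f : ↥Ggrp) (ε : ℝ), 0 < ε ∧ s = {g : ↥Ggrp | dG f g < ε}}

/-! The pseudometric `d` is left-invariant and comes from the group seminorm `g ↦ ‖supp g‖`, so
`G` is a topological group as soon as every conjugation `h ↦ f h f⁻¹` is continuous at `1`.
Since `supp (f h f⁻¹) = f '' supp h`, this says that `f` maps sets of small norm to sets of small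
norm. Choose a finite `T` such that `supp f \ T` has norm `< ε / 2`; a set `S` of small enough
norm misses the finitely many points of `f⁻¹ T`, hence `f '' S ⊆ S ∪ (supp f \ T)`. -/

open Filter Topology Metric

theorem Metric.eq_generateFrom_balls {α : Type*} [PseudoMetricSpace α] :
    (PseudoMetricSpace.toUniformSpace.toTopologicalSpace : TopologicalSpace α) =
      TopologicalSpace.generateFrom {s | ∃ (x : α) (ε : ℝ), 0 < ε ∧ s = {y | dist x y < ε}} := by
  refine (TopologicalSpace.isTopologicalBasis_of_isOpen_of_nhds ?_ ?_).eq_generateFrom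
  · rintro _ ⟨x, ε, -, rfl⟩
    simp only [dist_comm x]
    exact isOpen_ball
  · intro x u hx hu
    obtain ⟨ε, hε, hball⟩ := Metric.isOpen_iff.1 hu x hx
    refine ⟨{y | dist x y < ε}, ⟨x, ε, hε, rfl⟩, by simpa using hε, fun y hy => hball ?_⟩
    rwa [mem_ball, dist_comm]

theorem SeminormedGroup.isTopologicalGroup_of_tendsto_conj {E : Type*} [SeminormedGroup E]
    (hconj : ∀ g : E, Tendsto (g * · * g⁻¹) (𝓝 1) (𝓝 1)) : IsTopologicalGroup E := by
  refine IsTopologicalGroup.of_nhds_one ?_ ?_ (fun g => ?_) hconj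
  · refine squeeze_one_norm (fun x => norm_mul_le' x.1 x.2) ?_
    simpa using (tendsto_norm_one.comp tendsto_fst).add (tendsto_norm_one.comp tendsto_snd)
  · simpa only [tendsto_one_iff_norm_tendsto_zero, norm_inv'] using tendsto_norm_one
  · have h := (IsometryEquiv.mulLeft g).toHomeomorph.map_nhds_eq 1
    rw [IsometryEquiv.coe_toHomeomorph, IsometryEquiv.mulLeft_apply, mul_one] at h
    exact h.symm

lemma wt_pos (p : ℕ × ℕ) : 0 < wt p :=
  ENNReal.mul_pos two_ne_zero (ENNReal.inv_ne_zero.2 (ENNReal.pow_ne_top ENNReal.ofNat_ne_top))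

lemma wt_le_nrmS {S : Set (ℕ × ℕ)} {p : ℕ × ℕ} (hp : p ∈ S) : wt p ≤ nrmS S :=
  (Set.indicator_of_mem hp wt).symm.trans_le (ENNReal.le_tsum p)

lemma exists_finset_nrmS_diff_lt {A : Set (ℕ × ℕ)} (hA : nrmS A ≠ ⊤) {ε : ℝ≥0∞} (hε : 0 < ε) :
    ∃ T : Finset (ℕ × ℕ), nrmS (A \ T) < ε := by
  obtain ⟨T, hT⟩ :=
    ((tendsto_order.1 (ENNReal.tendsto_tsum_compl_atTop_zero (f := A.indicator wt) hA)).2 ε hε).exists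
  refine ⟨T, ?_⟩
  rwa [nrmS, Set.sdiff_eq, Set.inter_comm, ← Set.indicator_indicator, ← tsum_subtype]

lemma exists_pos_forall_nrmS_lt_disjoint (F : Finset (ℕ × ℕ)) :
    ∃ δ > 0, ∀ S : Set (ℕ × ℕ), nrmS S < δ → Disjoint S F := by
  refine ⟨F.inf wt, (Finset.lt_inf_iff ENNReal.zero_lt_top).2 fun p _ => wt_pos p, fun S hS => ?_⟩
  refine Set.disjoint_left.2 fun p hpS hpF => lt_irrefl (wt p) ?_
  exact (wt_le_nrmS hpS).trans_lt (hS.trans_le (Finset.inf_le hpF))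

lemma apply_mem_suppP {f : Equiv.Perm (ℕ × ℕ)} {p : ℕ × ℕ} (hp : p ∈ suppP f) :
    f p ∈ suppP f :=
  fun h => hp (f.injective h)

lemma exists_pos_forall_nrmS_image_lt (f : Equiv.Perm (ℕ × ℕ)) (hf : nrmS (suppP f) ≠ ⊤)
    {ε : ℝ≥0∞} (hε : 0 < ε) : ∃ δ > 0, ∀ S : Set (ℕ × ℕ), nrmS S < δ → nrmS (f '' S) < ε := by
  obtain ⟨T, hT⟩ := exists_finset_nrmS_diff_lt hf (ENNReal.half_pos hε.ne')
  obtain ⟨δ, hδ, hdisj⟩ := exists_pos_forall_nrmS_lt_disjoint (T.preimage f f.injective.injOn)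
  refine ⟨min δ (ε / 2), lt_min hδ (ENNReal.half_pos hε.ne'), fun S hS => ?_⟩
  have himg : f '' S ⊆ S ∪ (suppP f \ T) := by
    rintro _ ⟨p, hpS, rfl⟩
    by_cases hp : p ∈ suppP f
    · refine Or.inr ⟨apply_mem_suppP hp, fun hpT => ?_⟩
      exact Set.disjoint_left.1 (hdisj S (hS.trans_le (min_le_left _ _))) hpS (by simpa using hpT)
    · exact Or.inl (by rwa [show f p = p from not_not.1 hp])
  calc nrmS (f '' S) ≤ nrmS S + nrmS (suppP f \ T) := (nrmS_mono himg).trans (nrmS_union_le _ _)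
    _ < ε / 2 + ε / 2 := ENNReal.add_lt_add (hS.trans_le (min_le_right _ _)) hT
    _ = ε := ENNReal.add_halves ε

lemma suppP_mul_subset (f g : Equiv.Perm (ℕ × ℕ)) : suppP (f * g) ⊆ suppP f ∪ suppP g := by
  intro p hp
  by_contra! h
  simp only [Set.mem_union, suppP, Set.mem_ofPred_eq, not_or, not_not] at h
  exact hp (by rw [Equiv.Perm.mul_apply, h.2, h.1])

lemma suppP_conj (f h : Equiv.Perm (ℕ × ℕ)) : suppP (f * h * f⁻¹) = f '' suppP h := by
  ext q
  rw [Set.mem_image_equiv]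
  simp only [suppP, Set.mem_ofPred_eq, Equiv.Perm.mul_apply, Equiv.Perm.inv_def, ne_eq,
    ← Equiv.eq_symm_apply]

lemma nrmS_suppP_ne_top (g : Ggrp) : nrmS (suppP g) ≠ ⊤ := g.2.ne

namespace Ggrp

noncomputable def suppSeminorm : GroupSeminorm Ggrp where
  toFun g := (nrmS (suppP g)).toReal
  map_one' := by
    rw [show suppP ((1 : Ggrp) : Equiv.Perm (ℕ × ℕ)) = ∅ from Set.eq_empty_of_forall_notMem
      fun _ h => h rfl, nrmS_empty, ENNReal.toReal_zero]
  mul_le' f g := by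
    rw [← ENNReal.toReal_add (nrmS_suppP_ne_top f) (nrmS_suppP_ne_top g)]
    exact ENNReal.toReal_mono (ENNReal.add_ne_top.2 ⟨nrmS_suppP_ne_top f, nrmS_suppP_ne_top g⟩)
      ((nrmS_mono (suppP_mul_subset f g)).trans (nrmS_union_le _ _))
  inv' g := by rw [Subgroup.coe_inv, suppP_inv]

noncomputable instance : SeminormedGroup Ggrp := suppSeminorm.toSeminormedGroup

lemma tendsto_conj_nhds_one (g : Ggrp) : Tendsto (g * · * g⁻¹) (𝓝 1) (𝓝 1) := by
  refine Metric.tendsto_nhds_nhds.2 fun ε hε => ?_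
  obtain ⟨δ, hδ, hsmall⟩ :=
    exists_pos_forall_nrmS_image_lt g (nrmS_suppP_ne_top g) (ENNReal.ofReal_pos.2 hε)
  obtain ⟨r, -, hr, hrδ⟩ := ENNReal.lt_iff_exists_real_btwn.1 hδ
  refine ⟨r, ENNReal.ofReal_pos.1 hr, fun {x} hx => ?_⟩
  rw [dist_one_right] at hx ⊢
  have hx' : nrmS (suppP x) < ENNReal.ofReal r :=
    (ENNReal.lt_ofReal_iff_toReal_lt (nrmS_suppP_ne_top x)).2 hx
  have hconj := hsmall _ (hx'.trans hrδ)
  rw [← suppP_conj] at hconj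
  exact ENNReal.toReal_lt_of_lt_ofReal hconj

end Ggrp

lemma tG_eq_metricTopology : tG = PseudoMetricSpace.toUniformSpace.toTopologicalSpace :=
  Metric.eq_generateFrom_balls.symm

/-- With respect to the topology induced by the metric
`d(f,g) = ‖supp (f⁻¹ ∘ g)‖`, the group `G = {g ∈ Sym(ℕ × ℕ) | ‖supp g‖ < ∞}` is a
topological group: composition and inversion are continuous. In particular, for every
`f ∈ G` the conjugation map `h ↦ f * h * f⁻¹` is continuous at the identity. -/
theorem statement12 :
    (@Continuous (↥Ggrp × ↥Ggrp) ↥Ggrp (@instTopologicalSpaceProd _ _ tG tG) tG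
      (fun p => p.1 * p.2)) ∧
    (@Continuous ↥Ggrp ↥Ggrp tG tG (fun g => g⁻¹)) ∧
    (∀ f : ↥Ggrp, @ContinuousAt ↥Ggrp ↥Ggrp tG tG (fun h => f * h * f⁻¹) 1) := by
  have := SeminormedGroup.isTopologicalGroup_of_tendsto_conj Ggrp.tendsto_conj_nhds_one
  rw [tG_eq_metricTopology]
  exact ⟨continuous_mul, continuous_inv, fun f => by fun_prop⟩
end

section
/- Let a ∈ H be given by a(i,j) = 1 iff j = 0, and for n < ω let b_n ∈ H be given by b_n(i,j) = 1 iff j = n+1. Then for every n < ω, the orbit of a under the pointwise stabilizer G_{{b_0,…,b_{n−1}}} equals the set {x ∈ H : supp(x) is infinite, and x(i,j) = 0 for all i < ω and all j with 1 ≤ j ≤ n}; in particular, this orbit is a G_δ subset of the metric space (H, d_H). -/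
open scoped ENNReal

def colEquiv (c : ℕ) : ℕ ≃ {p : ℕ × ℕ | p.2 = c} where
  toFun := fun i => ⟨(i, c), rfl⟩
  invFun := fun p => p.1.1
  left_inv := fun _ => rfl
  right_inv := fun p => Subtype.ext (Prod.ext rfl p.2.symm)

lemma nrmS_column_lt_top (c : ℕ) : nrmS {p : ℕ × ℕ | p.2 = c} < ⊤ := by
  set e := colEquiv c with he
  have h0 : nrmS {p : ℕ × ℕ | p.2 = c} = ∑' i : ℕ, wt ((e i : ℕ × ℕ)) := by
    rw [nrmS, ← tsum_subtype]
    exact (Equiv.tsum_eq e fun p => wt (p : ℕ × ℕ)).symm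
  have h1 : nrmS {p : ℕ × ℕ | p.2 = c} = ∑' i : ℕ, wt (i, c) := h0
  rw [h1]
  have h2 : ∀ i : ℕ, wt (i, c) = ((3 : ℝ≥0∞)⁻¹) ^ i * (2 * 3⁻¹) := by
    intro i
    rw [wt, pow_succ, ENNReal.mul_inv (Or.inr (by norm_num)) (Or.inr (by norm_num)),
      ← ENNReal.inv_pow]
    ring
  simp_rw [h2]
  rw [ENNReal.tsum_mul_right, ENNReal.tsum_geometric]
  refine ENNReal.mul_lt_top ?_ ?_
  · rw [lt_top_iff_ne_top]
    refine ENNReal.inv_ne_top.2 ?_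
    rw [ne_eq, tsub_eq_zero_iff_le, not_le]
    exact ENNReal.inv_lt_one.2 (by norm_num)
  · exact ENNReal.mul_lt_top (by norm_num) (by simp [ENNReal.inv_lt_top])

/-- The topology on `H` induced by the metric `d_H`: the topology generated by the open
balls of `d_H`. -/
noncomputable def tH : TopologicalSpace ↥Hgrp :=
  TopologicalSpace.generateFrom
    {s | ∃ (z : ↥Hgrp) (ε : ℝ), 0 < ε ∧ s = {w : ↥Hgrp | dH z w < ε}}

/-- The element `a ∈ H` given by `a (i,j) = 1` iff `j = 0`. -/
noncomputable def aElt : ↥Hgrp :=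
  ⟨fun p => if p.2 = 0 then 1 else 0, by
    show nrmZ _ < ⊤
    refine lt_of_le_of_lt (nrmS_mono ?_) (nrmS_column_lt_top 0)
    intro p hp
    by_contra hc
    simp only [suppZ, Set.mem_setOf_eq] at hp
    rw [if_neg (show ¬ p.2 = 0 from hc)] at hp
    exact absurd hp (by decide)⟩

/-- The element `b_n ∈ H` given by `b_n (i,j) = 1` iff `j = n + 1`. -/
noncomputable def bElt (n : ℕ) : ↥Hgrp :=
  ⟨fun p => if p.2 = n + 1 then 1 else 0, by
    show nrmZ _ < ⊤
    refine lt_of_le_of_lt (nrmS_mono ?_) (nrmS_column_lt_top (n + 1))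
    intro p hp
    by_contra hc
    simp only [suppZ, Set.mem_setOf_eq] at hp
    rw [if_neg (show ¬ p.2 = n + 1 from hc)] at hp
    exact absurd hp (by decide)⟩

/-- The set `{b_0, …, b_{n-1}} ⊆ H`. -/
noncomputable def bSet (n : ℕ) : Set ↥Hgrp := {x | ∃ k < n, x = bElt k}

lemma actGH_one (h : ↥Hgrp) : actGH 1 h = h := by
  apply Subtype.ext
  funext p
  show (h : (ℕ × ℕ) → ZMod 2) (((1 : Equiv.Perm (ℕ × ℕ)))⁻¹ p) = _
  simp

lemma actGH_mul (g₁ g₂ : ↥Ggrp) (h : ↥Hgrp) :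
    actGH (g₁ * g₂) h = actGH g₁ (actGH g₂ h) := by
  apply Subtype.ext
  funext p
  show (h : (ℕ × ℕ) → ZMod 2) (((g₁ : Equiv.Perm (ℕ × ℕ)) * (g₂ : Equiv.Perm (ℕ × ℕ)))⁻¹ p)
      = (h : (ℕ × ℕ) → ZMod 2) ((g₂ : Equiv.Perm (ℕ × ℕ))⁻¹ ((g₁ : Equiv.Perm (ℕ × ℕ))⁻¹ p))
  rw [mul_inv_rev, Equiv.Perm.mul_apply]

/-- The pointwise stabilizer `G_C ≤ G` of a set `C ⊆ H`. -/
noncomputable def fixH (C : Set ↥Hgrp) : Subgroup ↥Ggrp where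
  carrier := {g | ∀ c ∈ C, actGH g c = c}
  one_mem' := fun c _ => actGH_one c
  mul_mem' {g₁ g₂} h₁ h₂ := fun c hc => by rw [actGH_mul, h₂ c hc, h₁ c hc]
  inv_mem' {g} hg := fun c hc => by
    conv_lhs => rw [← hg c hc]
    rw [← actGH_mul, inv_mul_cancel, actGH_one]

/-- The orbit `o(a/C)` of `a ∈ H` under the pointwise stabilizer `G_C`. -/
noncomputable def orbitOverH (C : Set ↥Hgrp) (a : ↥Hgrp) : Set ↥Hgrp :=
  {x | ∃ g ∈ fixH C, actGH g a = x}

/-- `a ⫝_A B` in `(H,G)`: the set of those `g ∈ G_A` with `g • a ∈ o(a/A ∪ B)` is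
non-meager in `G_A` (with the subspace topology from the metric topology of `G`). -/
noncomputable def NMIndepH (a : ↥Hgrp) (A B : Set ↥Hgrp) : Prop :=
  ¬ @IsMeagre ↥(fixH A) (@instTopologicalSpaceSubtype ↥Ggrp _ tG)
      {g : ↥(fixH A) | actGH (g : ↥Ggrp) a ∈ orbitOverH (A ∪ B) a}


/-!
An element `g` of `G` fixes `b_k` iff it maps column `k + 1` onto itself, and `g • a` is the
indicator of the image of column `0`; so every point of the orbit has infinite support missing
columns `1, …, n`. Conversely, let `S` be such a support. Since `‖S‖ < ∞`, every row meets `S`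
in finitely many points, so we may pick in each row a point beyond column `n` outside `S`; these
form a set `F` with the same norm as a column. Inside `U = column 0 ∪ S ∪ F` both complements of
column `0` and of `S` contain `F`, hence are infinite, and a bijection from column `0` onto `S`
extends to a permutation supported in `U`: it lies in `G` and fixes columns `1, …, n` pointwise.

For the `G_δ` part: two points of the Cantor set whose ternary digits first differ at place `k`
are at distance at least `3^{-(k+1)}`, so each coordinate map `x ↦ x (i, j)` is locally constant
for `d_H`, and the orbit is a countable intersection of countable unions of cylinders.
-/

namespace Real

theorem inv_le_abs_ofDigits_sub {b : ℕ} {x y : ℕ → Fin b} (h : 2 ≤ |(x 0 : ℝ) - y 0|) :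
    (b : ℝ)⁻¹ ≤ |ofDigits x - ofDigits y| := by
  have hb : (0 : ℝ) < b := by exact_mod_cast Fin.pos (x 0)
  set d := ofDigits (fun i ↦ x (i + 1)) - ofDigits (fun i ↦ y (i + 1))
  have hd : |d| ≤ 1 := abs_le.2
    ⟨by linarith [ofDigits_nonneg (fun i ↦ x (i + 1)), ofDigits_le_one (fun i ↦ y (i + 1))],
      by linarith [ofDigits_le_one (fun i ↦ x (i + 1)), ofDigits_nonneg (fun i ↦ y (i + 1))]⟩
  have hsplit : ofDigits x - ofDigits y = (b : ℝ)⁻¹ * ((x 0 - y 0 : ℝ) + d) := by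
    rw [ofDigits_eq_sum_add_ofDigits x 1, ofDigits_eq_sum_add_ofDigits y 1]
    simp only [Finset.sum_range_one, ofDigitsTerm, d]
    ring
  rw [hsplit, abs_mul, abs_of_pos (inv_pos.2 hb)]
  have := abs_add_le ((x 0 - y 0 : ℝ) + d) (-d)
  rw [add_neg_cancel_right, abs_neg] at this
  nlinarith [inv_pos.2 hb]

theorem inv_pow_succ_le_abs_ofDigits_sub {b n : ℕ} {x y : ℕ → Fin b}
    (hxy : ∀ i < n, x i = y i) (h : 2 ≤ |(x n : ℝ) - y n|) :
    ((b : ℝ) ^ (n + 1))⁻¹ ≤ |ofDigits x - ofDigits y| := by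
  have hb : (0 : ℝ) < b := by exact_mod_cast Fin.pos (x 0)
  have hsum : ∑ i ∈ Finset.range n, ofDigitsTerm x i = ∑ i ∈ Finset.range n, ofDigitsTerm y i :=
    Finset.sum_congr rfl fun i hi ↦ by simp only [ofDigitsTerm, hxy i (Finset.mem_range.1 hi)]
  have htail := inv_le_abs_ofDigits_sub (x := fun i ↦ x (i + n)) (y := fun i ↦ y (i + n))
    (by simpa using h)
  rw [ofDigits_eq_sum_add_ofDigits x n, ofDigits_eq_sum_add_ofDigits y n, hsum,
    add_sub_add_left_eq_sub, ← mul_sub, abs_mul, abs_of_pos (by positivity), pow_succ, mul_inv]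
  gcongr

end Real

def cantorDigits (u : ℕ → ZMod 2) (i : ℕ) : Fin 3 :=
  ⟨2 * (u i).val, by have := (u i).val_lt; omega⟩

lemma phiC_eq_ofDigits (u : ℕ → ZMod 2) : phiC u = Real.ofDigits (cantorDigits u) := by
  simp only [phiC, Real.ofDigits, Real.ofDigitsTerm, cantorDigits]
  push_cast
  rfl

lemma two_le_abs_cantorDigits_sub {u v : ℕ → ZMod 2} {i : ℕ} (h : u i ≠ v i) :
    2 ≤ |((cantorDigits u i : ℕ) : ℝ) - (cantorDigits v i : ℕ)| := by
  simp only [cantorDigits]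
  generalize u i = a at h
  generalize v i = b at h
  fin_cases a <;> fin_cases b <;> first | exact absurd rfl h | norm_num [ZMod.val]

lemma inv_pow_le_abs_phiC_sub {u v : ℕ → ZMod 2} {k : ℕ} (h : u k ≠ v k) :
    ((3 : ℝ) ^ (k + 1))⁻¹ ≤ |phiC u - phiC v| := by
  classical
  have hex : ∃ m, u m ≠ v m := ⟨k, h⟩
  calc ((3 : ℝ) ^ (k + 1))⁻¹ ≤ ((3 : ℝ) ^ (Nat.find hex + 1))⁻¹ := by
        gcongr
        · norm_num
        · exact Nat.find_min' hex h
    _ ≤ |phiC u - phiC v| := by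
        rw [phiC_eq_ofDigits, phiC_eq_ofDigits]
        refine Real.inv_pow_succ_le_abs_ofDigits_sub (fun i hi ↦ ?_)
          (two_le_abs_cantorDigits_sub (Nat.find_spec hex))
        simp [cantorDigits, not_ne_iff.1 (Nat.find_min hex hi)]

lemma wt_ne_top (p : ℕ × ℕ) : wt p ≠ ⊤ := ENNReal.mul_ne_top (by norm_num) (by simp)

lemma wt_ne_zero (p : ℕ × ℕ) : wt p ≠ 0 := by simp [wt]

lemma phiC_col_eq_toReal (z : ℕ × ℕ → ZMod 2) (j : ℕ) :
    phiC (fun i ↦ z (i, j)) = (∑' i, (suppZ z).indicator wt (i, j)).toReal := by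
  rw [ENNReal.tsum_toReal_eq (f := fun i ↦ (suppZ z).indicator wt (i, j)) fun i ↦
    ne_top_of_le_ne_top (wt_ne_top (i, j)) (Set.indicator_le_self _ _ _), phiC]
  refine tsum_congr fun i ↦ ?_
  obtain h | h : z (i, j) = 0 ∨ z (i, j) = 1 := by generalize z (i, j) = y; decide +revert
  · simp [h, suppZ]
  · simp [h, suppZ, wt, ZMod.val_one]

lemma summable_phiC_col (z : ↥Hgrp) :
    Summable fun j ↦ phiC (fun i ↦ (z : ℕ × ℕ → ZMod 2) (i, j)) := by
  simp_rw [phiC_col_eq_toReal]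
  refine ENNReal.summable_toReal ?_
  rw [ENNReal.tsum_comm, ← ENNReal.tsum_prod (f := fun i j ↦ (suppZ _).indicator wt (i, j))]
  exact z.2.ne

lemma abs_phiC_col_sub_le_dH (z w : ↥Hgrp) (j : ℕ) :
    |phiC (fun i ↦ (z : ℕ × ℕ → ZMod 2) (i, j)) - phiC (fun i ↦ (w : ℕ × ℕ → ZMod 2) (i, j))|
      ≤ dH z w := by
  have hnonneg (x : ↥Hgrp) (j : ℕ) : 0 ≤ phiC (fun i ↦ (x : ℕ × ℕ → ZMod 2) (i, j)) := by
    rw [phiC_col_eq_toReal]; exact ENNReal.toReal_nonneg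
  refine Summable.le_tsum (f := fun j ↦ |phiC (fun i ↦ (z : ℕ × ℕ → ZMod 2) (i, j)) -
    phiC (fun i ↦ (w : ℕ × ℕ → ZMod 2) (i, j))|) ?_ j fun _ _ ↦ abs_nonneg _
  refine .of_nonneg_of_le (fun _ ↦ abs_nonneg _) (fun j ↦ ?_)
    ((summable_phiC_col z).add (summable_phiC_col w))
  rw [abs_sub_le_iff]
  constructor <;> linarith [hnonneg z j, hnonneg w j]

lemma inv_pow_le_dH_of_ne {x y : ↥Hgrp} {p : ℕ × ℕ}
    (h : (x : ℕ × ℕ → ZMod 2) p ≠ (y : ℕ × ℕ → ZMod 2) p) :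
    ((3 : ℝ) ^ (p.1 + 1))⁻¹ ≤ dH x y :=
  (inv_pow_le_abs_phiC_sub (u := fun i ↦ (x : ℕ × ℕ → ZMod 2) (i, p.2))
    (v := fun i ↦ (y : ℕ × ℕ → ZMod 2) (i, p.2)) h).trans (abs_phiC_col_sub_le_dH x y p.2)

section Topology

open Topology

-- `↥Hgrp` also carries the subspace topology of the product `ℕ × ℕ → ZMod 2`; the topology
-- meant here is the metric one.
attribute [local instance] tH

lemma isOpen_of_forall_dH_lt_subset {s : Set ↥Hgrp}
    (h : ∀ x ∈ s, ∃ ε > 0, ∀ y, dH x y < ε → y ∈ s) : IsOpen[tH] s := by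
  have hs : s = ⋃ x ∈ s, ⋃ ε ∈ {ε : ℝ | 0 < ε ∧ ∀ y, dH x y < ε → y ∈ s}, {y | dH x y < ε} := by
    refine Set.Subset.antisymm (fun x hx ↦ ?_) ?_
    · obtain ⟨ε, hε, hball⟩ := h x hx
      simp only [Set.mem_iUnion]
      exact ⟨x, hx, ε, ⟨hε, hball⟩, by simpa [dH] using hε⟩
    · simp only [Set.iUnion_subset_iff]
      exact fun x _ ε hε y hy ↦ hε.2 y hy
  rw [hs]
  exact isOpen_biUnion fun x _ ↦ isOpen_biUnion fun ε hε ↦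
    TopologicalSpace.isOpen_generateFrom_of_mem ⟨x, ε, hε.1, rfl⟩

lemma isOpen_setOf_apply_eq (p : ℕ × ℕ) (v : ZMod 2) :
    IsOpen[tH] {x : ↥Hgrp | (x : ℕ × ℕ → ZMod 2) p = v} := by
  refine isOpen_of_forall_dH_lt_subset fun x hx ↦
    ⟨((3 : ℝ) ^ (p.1 + 1))⁻¹, by positivity, fun y hy ↦ ?_⟩
  by_contra hne
  exact (inv_pow_le_dH_of_ne (p := p) (by rw [hx]; exact Ne.symm hne)).not_gt hy

lemma isGδ_setOf_suppZ_infinite :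
    @IsGδ _ tH {x : ↥Hgrp | (suppZ (x : ℕ × ℕ → ZMod 2)).Infinite} := by
  have h : {x : ↥Hgrp | (suppZ (x : ℕ × ℕ → ZMod 2)).Infinite} =
      ⋂ q : ℕ × ℕ, ⋃ p ∈ {p | ¬p ≤ q}, {x : ↥Hgrp | (x : ℕ × ℕ → ZMod 2) p = 1} := by
    ext x
    simp [Set.Infinite, Set.finite_iff_bddAbove, not_bddAbove_iff', suppZ, and_comm]
  rw [h]
  exact .iInter_of_isOpen fun q ↦ isOpen_biUnion fun p _ ↦ isOpen_setOf_apply_eq p 1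

lemma isGδ_setOf_apply_eq_zero_of_le (n : ℕ) :
    @IsGδ _ tH {x : ↥Hgrp | ∀ i j : ℕ, 1 ≤ j → j ≤ n → (x : ℕ × ℕ → ZMod 2) (i, j) = 0} := by
  simp only [Set.ofPred_forall]
  exact .iInter fun i ↦ .iInter fun j ↦ .iInter fun _ ↦ .iInter fun _ ↦
    (isOpen_setOf_apply_eq (i, j) 0).isGδ

end Topology

theorem Equiv.Perm.exists_image_eq_of_infinite {α : Type*} [Countable α] {S T U : Set α}
    (hTU : T ⊆ U) (hSU : S ⊆ U) (hT : T.Infinite) (hS : S.Infinite)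
    (hUT : (U \ T).Infinite) (hUS : (U \ S).Infinite) :
    ∃ g : Equiv.Perm α, g '' T = S ∧ ∀ a ∉ U, g a = a := by
  classical
  have := hT.to_subtype; have := hS.to_subtype; have := hUT.to_subtype; have := hUS.to_subtype
  obtain ⟨e⟩ : Nonempty (T ≃ S) := inferInstance
  obtain ⟨f⟩ : Nonempty (↥(U \ T) ≃ ↥(U \ S)) := inferInstance
  set σ : Equiv.Perm U := (Equiv.Set.sumDiffSubset hTU).symm.trans
    ((e.sumCongr f).trans (Equiv.Set.sumDiffSubset hSU))
  set g := Equiv.Perm.ofSubtype σ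
  have hg : ∀ a, g a ∈ S ↔ a ∈ T := by
    intro a
    by_cases haU : a ∈ U
    · rw [Equiv.Perm.ofSubtype_apply_of_mem σ haU]
      by_cases haT : a ∈ T
      · simp [σ, Equiv.Set.sumDiffSubset_symm_apply_of_mem hTU (x := ⟨a, haU⟩) haT, haT]
      · simpa [σ, Equiv.Set.sumDiffSubset_symm_apply_of_notMem hTU (x := ⟨a, haU⟩) haT, haT]
          using (f ⟨a, haU, haT⟩).2.2
    · rw [Equiv.Perm.ofSubtype_apply_of_not_mem σ haU]
      exact iff_of_false (fun h ↦ haU (hSU h)) (fun h ↦ haU (hTU h))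
  refine ⟨g, Set.ext fun a ↦ ?_, fun a ha ↦ Equiv.Perm.ofSubtype_apply_of_not_mem σ ha⟩
  rw [Set.mem_image_equiv, ← hg, Equiv.apply_symm_apply]

lemma nrmS_range_eq_tsum {f : ℕ → ℕ × ℕ} (hf : Function.Injective f) :
    nrmS (Set.range f) = ∑' k, wt (f k) := by
  rw [nrmS, ← tsum_subtype]
  exact (Equiv.tsum_eq (Equiv.ofInjective f hf) (fun p ↦ wt p)).symm

lemma nrmS_graph_lt_top (c : ℕ → ℕ) : nrmS (Set.range fun k ↦ (k, c k)) < ⊤ := by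
  have hinj (c : ℕ → ℕ) : Function.Injective fun k ↦ (k, c k) := fun _ _ h ↦ (Prod.ext_iff.1 h).1
  have hcol : {p : ℕ × ℕ | p.2 = 0} = Set.range fun k ↦ (k, 0) := by
    ext ⟨i, j⟩; simp [eq_comm]
  calc nrmS (Set.range fun k ↦ (k, c k)) = ∑' k, wt (k, 0) := nrmS_range_eq_tsum (hinj c)
    _ = nrmS {p : ℕ × ℕ | p.2 = 0} := by rw [hcol, nrmS_range_eq_tsum (hinj _)]
    _ < ⊤ := nrmS_column_lt_top 0

lemma nrmS_suppP_lt_top_of_forall_notMem {g : Equiv.Perm (ℕ × ℕ)} {U : Set (ℕ × ℕ)}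
    (hU : nrmS U < ⊤) (hg : ∀ a ∉ U, g a = a) : nrmS (suppP g) < ⊤ :=
  (nrmS_mono fun a (ha : g a ≠ a) ↦ by_contra fun h ↦ ha (hg a h)).trans_lt hU

lemma encard_row_mul_wt_le_nrmS (S : Set (ℕ × ℕ)) (k : ℕ) :
    ({j | (k, j) ∈ S}.encard : ℝ≥0∞) * wt (k, 0) ≤ nrmS S :=
  calc ({j | (k, j) ∈ S}.encard : ℝ≥0∞) * wt (k, 0)
      = ∑' j, S.indicator wt (k, j) := by
        rw [← ENNReal.tsum_set_const, tsum_subtype {j | (k, j) ∈ S} fun _ ↦ wt (k, 0)]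
        exact tsum_congr fun j ↦ by by_cases h : (k, j) ∈ S <;> simp [h, wt]
    _ ≤ ∑' i, ∑' j, S.indicator wt (i, j) := ENNReal.le_tsum (f := fun i ↦ ∑' j, _) k
    _ = nrmS S := (ENNReal.tsum_prod (f := fun i j ↦ S.indicator wt (i, j))).symm

lemma finite_row_of_nrmS_lt_top {S : Set (ℕ × ℕ)} (hS : nrmS S < ⊤) (k : ℕ) :
    {j | (k, j) ∈ S}.Finite := by
  rw [← Set.encard_lt_top_iff, ← ENat.toENNReal_lt_top]
  exact ENNReal.lt_top_of_mul_ne_top_left ((encard_row_mul_wt_le_nrmS S k).trans_lt hS).ne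
    (wt_ne_zero _)

lemma eq_of_suppZ_eq {z w : ℕ × ℕ → ZMod 2} (h : suppZ z = suppZ w) : z = w := by
  funext p
  have hp : z p = 1 ↔ w p = 1 := Set.ext_iff.1 h p
  revert hp
  generalize z p = a
  generalize w p = b
  decide +revert

lemma suppZ_actGH (g : ↥Ggrp) (h : ↥Hgrp) :
    suppZ (actGH g h : ℕ × ℕ → ZMod 2) = (g : Equiv.Perm (ℕ × ℕ)) '' suppZ h := by
  ext p
  rw [Set.mem_image_equiv]
  rfl

lemma actGH_eq_self_iff (g : ↥Ggrp) (h : ↥Hgrp) :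
    actGH g h = h ↔ (g : Equiv.Perm (ℕ × ℕ)) '' suppZ h = suppZ h := by
  rw [← suppZ_actGH]
  exact ⟨fun e ↦ by rw [e], fun e ↦ Subtype.ext (eq_of_suppZ_eq e)⟩

lemma suppZ_aElt : suppZ (aElt : ℕ × ℕ → ZMod 2) = {p | p.2 = 0} := by
  ext p
  by_cases h : p.2 = 0 <;> simp [suppZ, aElt, h]

lemma suppZ_bElt (k : ℕ) : suppZ (bElt k : ℕ × ℕ → ZMod 2) = {p | p.2 = k + 1} := by
  ext p
  by_cases h : p.2 = k + 1 <;> simp [suppZ, bElt, h]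

lemma mem_fixH_bSet_iff {g : ↥Ggrp} {n : ℕ} :
    g ∈ fixH (bSet n) ↔
      ∀ k < n, (g : Equiv.Perm (ℕ × ℕ)) '' {p | p.2 = k + 1} = {p | p.2 = k + 1} := by
  constructor
  · intro hg k hk
    rw [← suppZ_bElt, ← actGH_eq_self_iff]
    exact hg _ ⟨k, hk, rfl⟩
  · rintro hg _ ⟨k, hk, rfl⟩
    rw [actGH_eq_self_iff, suppZ_bElt]
    exact hg k hk

lemma infinite_setOf_snd_eq (j : ℕ) : {p : ℕ × ℕ | p.2 = j}.Infinite :=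
  Set.infinite_of_injective_forall_mem (f := fun i ↦ (i, j))
    (fun _ _ h ↦ (Prod.ext_iff.1 h).1) fun _ ↦ rfl

lemma notMem_suppZ_iff {z : ℕ × ℕ → ZMod 2} {p : ℕ × ℕ} : p ∉ suppZ z ↔ z p = 0 := by
  change ¬z p = 1 ↔ z p = 0
  generalize z p = a
  decide +revert

lemma mem_fixH_bSet_of_forall_apply_eq {g : ↥Ggrp} {n : ℕ}
    (h : ∀ p : ℕ × ℕ, 1 ≤ p.2 → p.2 ≤ n → (g : Equiv.Perm (ℕ × ℕ)) p = p) :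
    g ∈ fixH (bSet n) :=
  mem_fixH_bSet_iff.2 fun k hk ↦ Set.EqOn.image_eq_self fun p hp ↦ by
    have hp : p.2 = k + 1 := hp
    exact h p (by omega) (by omega)

lemma suppZ_infinite_and_apply_eq_zero_of_mem_orbitOverH {n : ℕ} {x : ↥Hgrp}
    (hx : x ∈ orbitOverH (bSet n) aElt) :
    (suppZ (x : ℕ × ℕ → ZMod 2)).Infinite ∧
      ∀ i j : ℕ, 1 ≤ j → j ≤ n → (x : ℕ × ℕ → ZMod 2) (i, j) = 0 := by
  obtain ⟨g, hg, rfl⟩ := hx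
  simp only [← notMem_suppZ_iff, suppZ_actGH, suppZ_aElt]
  refine ⟨(infinite_setOf_snd_eq 0).image (Equiv.injective _).injOn, fun i j hj1 hjn ↦ ?_⟩
  have hij : (i, j) ∈ (g : Equiv.Perm (ℕ × ℕ)) '' {p | p.2 = j - 1 + 1} := by
    rw [mem_fixH_bSet_iff.1 hg (j - 1) (by omega)]
    exact (Nat.sub_add_cancel hj1).symm
  rw [Set.mem_image_equiv] at hij ⊢
  exact fun h0 ↦ by simp only [Set.mem_ofPred_eq] at hij h0; omega

lemma mem_orbitOverH_of_suppZ_infinite {n : ℕ} {x : ↥Hgrp}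
    (hinf : (suppZ (x : ℕ × ℕ → ZMod 2)).Infinite)
    (hvan : ∀ i j : ℕ, 1 ≤ j → j ≤ n → (x : ℕ × ℕ → ZMod 2) (i, j) = 0) :
    x ∈ orbitOverH (bSet n) aElt := by
  set S := suppZ (x : ℕ × ℕ → ZMod 2)
  set T : Set (ℕ × ℕ) := {p | p.2 = 0}
  have hrow (k : ℕ) : ∃ c, n < c ∧ (k, c) ∉ S :=
    ((Set.Ioi_infinite n).sdiff (finite_row_of_nrmS_lt_top x.2 k)).nonempty
  choose c hcn hcS using hrow
  set F := Set.range fun k ↦ (k, c k)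
  set U := T ∪ S ∪ F
  have hF : F.Infinite := Set.infinite_range_of_injective fun _ _ h ↦ (Prod.ext_iff.1 h).1
  have hFT : F ⊆ U \ T := by
    rintro _ ⟨k, rfl⟩
    exact ⟨Or.inr ⟨k, rfl⟩, fun h : c k = 0 ↦ by have := hcn k; omega⟩
  have hFS : F ⊆ U \ S := by
    rintro _ ⟨k, rfl⟩
    exact ⟨Or.inr ⟨k, rfl⟩, hcS k⟩
  obtain ⟨g, hgT, hgU⟩ := Equiv.Perm.exists_image_eq_of_infinite
    (Set.subset_union_left.trans Set.subset_union_left)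
    (Set.subset_union_right.trans Set.subset_union_left)
    (infinite_setOf_snd_eq 0) hinf (hF.mono hFT) (hF.mono hFS)
  have hgG : nrmS (suppP g) < ⊤ := by
    refine nrmS_suppP_lt_top_of_forall_notMem ?_ hgU
    refine (nrmS_union_le _ _).trans_lt (ENNReal.add_lt_top.2 ⟨?_, nrmS_graph_lt_top c⟩)
    exact (nrmS_union_le _ _).trans_lt (ENNReal.add_lt_top.2 ⟨nrmS_column_lt_top 0, x.2⟩)
  refine ⟨⟨g, hgG⟩, mem_fixH_bSet_of_forall_apply_eq fun p hp1 hpn ↦ hgU p ?_,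
    Subtype.ext (eq_of_suppZ_eq ?_)⟩
  · rintro ((h | h) | ⟨k, rfl⟩)
    · have : p.2 = 0 := h
      omega
    · exact notMem_suppZ_iff.2 (hvan p.1 p.2 hp1 hpn) h
    · have := hcn k
      simp only at hpn
      omega
  · rw [suppZ_actGH, suppZ_aElt]
    exact hgT

/-- Let `a ∈ H` be given by `a (i,j) = 1` iff `j = 0`, and for `n < ω` let
`b_n ∈ H` be given by `b_n (i,j) = 1` iff `j = n + 1`. Then for every `n < ω`, the orbit of
`a` under the pointwise stabilizer `G_{b_0,…,b_{n-1}}` equals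
`{x ∈ H | supp x is infinite and x (i,j) = 0 for all i and all 1 ≤ j ≤ n}`; in particular,
this orbit is a `G_δ` subset of the metric space `(H, d_H)`. -/
theorem statement17 (n : ℕ) :
    orbitOverH (bSet n) aElt =
      {x : ↥Hgrp | (suppZ (x : (ℕ × ℕ) → ZMod 2)).Infinite ∧
        ∀ i j : ℕ, 1 ≤ j → j ≤ n → (x : (ℕ × ℕ) → ZMod 2) (i, j) = 0} ∧
    @IsGδ ↥Hgrp tH (orbitOverH (bSet n) aElt) := by
  have horbit : orbitOverH (bSet n) aElt =
      {x : ↥Hgrp | (suppZ (x : (ℕ × ℕ) → ZMod 2)).Infinite ∧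
        ∀ i j : ℕ, 1 ≤ j → j ≤ n → (x : (ℕ × ℕ) → ZMod 2) (i, j) = 0} :=
    Set.Subset.antisymm (fun _ hx ↦ suppZ_infinite_and_apply_eq_zero_of_mem_orbitOverH hx)
      fun _ hx ↦ mem_orbitOverH_of_suppZ_infinite hx.1 hx.2
  exact ⟨horbit, horbit ▸
    @IsGδ.inter _ tH _ _ isGδ_setOf_suppZ_infinite (isGδ_setOf_apply_eq_zero_of_le n)⟩
end
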